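/- A real front profile B for the Ginzburg-Landau equation, i.e. a solution of B'' + cB' + B - B³ = 0 with B(-∞) = 1, B(+∞) = 0, satisfies for |c| ≥ 2 that B(ξ) ∈ (0,1) for all ξ ∈ ℝ, provided B is the heteroclinic orbit connecting (1,0) to (0,0) in the phase plane. -/

import Mathlib

/-!
Along a solution the energy `E = B'²/2 + B²/2 - B⁴/4` satisfies `E' = -c B'²`. Since `B` converges
at `±∞`, the mean value theorem makes `B'` come arbitrarily close to `0` arbitrarily far out, so `E`
has the cluster values `1/4` at `-∞` and `0` at `+∞`; for `c ≤ 0`, where `E` is non-decreasing,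
this is impossible. For `c ≥ 0` it gives `E ≤ 1/4`, so wherever `B = 1` also `B' = 0`, and by
uniqueness for the ODE `B ≡ 1` from there on, contradicting `B(+∞) = 0`.
Positivity uses that for `c ≥ 2` the operator factors as `B'' + cB' + B = (D + μ)(D + ν)B` with
real `μ, ν > 0`: as long as `B ≥ 0`, `(e^{μξ}(B' + νB))' = e^{μξ}B³ ≥ 0` keeps `B' + νB` positive,
hence `e^{νξ}B` increasing, so `B` cannot reach `0`.
-/

open Set Filter Real Topology

lemma mul_sub_le_abs_sub_of_le_abs_deriv {f f' : ℝ → ℝ} {a b δ : ℝ}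
    (hf : ∀ x, HasDerivAt f (f' x) x) (hab : a < b) (hδ : ∀ x ∈ Ioo a b, δ ≤ |f' x|) :
    δ * (b - a) ≤ |f b - f a| := by
  obtain ⟨η, hη, hslope⟩ :=
    exists_hasDerivAt_eq_slope f f' hab (HasDerivAt.continuousOn fun x _ => hf x) fun x _ => hf x
  have h := hδ η hη
  rwa [hslope, abs_div, abs_of_pos (sub_pos.2 hab), le_div_iff₀ (sub_pos.2 hab)] at h

lemma exists_ge_abs_deriv_lt_of_tendsto_atTop {f f' : ℝ → ℝ} {L : ℝ}
    (hf : ∀ x, HasDerivAt f (f' x) x) (hL : Tendsto f atTop (𝓝 L)) (a : ℝ) {δ : ℝ}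
    (hδ : 0 < δ) : ∃ x ≥ a, |f' x| < δ := by
  by_contra! hlarge
  obtain ⟨b, hb⟩ := eventually_atTop.1 (hL.eventually (Metric.ball_mem_nhds L (half_pos hδ)))
  have hmvt := mul_sub_le_abs_sub_of_le_abs_deriv hf (lt_add_one (max a b))
    fun x hx => hlarge x ((le_max_left a b).trans hx.1.le)
  have h₁ := hb (max a b + 1) (by linarith [le_max_right a b])
  have h₂ := hb (max a b) (le_max_right a b)
  rw [Real.dist_eq] at h₁ h₂
  have := abs_sub_le (f (max a b + 1)) L (f (max a b))
  rw [abs_sub_comm L] at this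
  linarith

lemma exists_le_abs_deriv_lt_of_tendsto_atBot {f f' : ℝ → ℝ} {L : ℝ}
    (hf : ∀ x, HasDerivAt f (f' x) x) (hL : Tendsto f atBot (𝓝 L)) (a : ℝ) {δ : ℝ}
    (hδ : 0 < δ) : ∃ x ≤ a, |f' x| < δ := by
  obtain ⟨x, hx, hδx⟩ := exists_ge_abs_deriv_lt_of_tendsto_atTop
    (fun x => (hf (-x)).comp x (hasDerivAt_neg x)) (hL.comp tendsto_neg_atTop_atBot) (-a) hδ
  exact ⟨-x, by linarith, by simpa using hδx⟩

lemma neBot_atTop_inf_comap_deriv {f f' : ℝ → ℝ} {L : ℝ} (hf : ∀ x, HasDerivAt f (f' x) x)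
    (hL : Tendsto f atTop (𝓝 L)) : (atTop ⊓ comap f' (𝓝 0)).NeBot := by
  refine (atTop_basis.inf (Metric.nhds_basis_ball.comap f')).neBot_iff.2 ?_
  rintro ⟨a, δ⟩ ⟨-, hδ⟩
  obtain ⟨x, hxa, hx⟩ := exists_ge_abs_deriv_lt_of_tendsto_atTop hf hL a hδ
  exact ⟨x, hxa, by simpa [Real.dist_eq] using hx⟩

lemma neBot_atBot_inf_comap_deriv {f f' : ℝ → ℝ} {L : ℝ} (hf : ∀ x, HasDerivAt f (f' x) x)
    (hL : Tendsto f atBot (𝓝 L)) : (atBot ⊓ comap f' (𝓝 0)).NeBot := by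
  refine (atBot_basis.inf (Metric.nhds_basis_ball.comap f')).neBot_iff.2 ?_
  rintro ⟨a, δ⟩ ⟨-, hδ⟩
  obtain ⟨x, hxa, hx⟩ := exists_le_abs_deriv_lt_of_tendsto_atBot hf hL a hδ
  exact ⟨x, hxa, by simpa [Real.dist_eq] using hx⟩

lemma monotoneOn_Icc_of_hasDerivAt_nonneg {f f' : ℝ → ℝ} {a b : ℝ}
    (hf : ∀ x, HasDerivAt f (f' x) x) (hf' : ∀ x ∈ Ioo a b, 0 ≤ f' x) :
    MonotoneOn f (Icc a b) :=
  monotoneOn_of_hasDerivWithinAt_nonneg (convex_Icc a b)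
    (HasDerivAt.continuousOn fun x _ => hf x) (fun x _ => (hf x).hasDerivWithinAt)
    (by simpa only [interior_Icc] using hf')

lemma exists_first_nonpos {f : ℝ → ℝ} (hf : Continuous f) {a b : ℝ} (hab : a ≤ b)
    (hb : f b ≤ 0) : ∃ t ∈ Icc a b, f t ≤ 0 ∧ ∀ s ∈ Ico a t, 0 < f s := by
  obtain ⟨t, ⟨htab, ht⟩, hleast⟩ :=
    (isCompact_Icc.inter_right (isClosed_le hf continuous_const)).exists_isLeast
      ⟨b, ⟨hab, le_rfl⟩, hb⟩
  refine ⟨t, htab, ht, fun s hs => ?_⟩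
  by_contra! hs₀
  exact (hleast ⟨⟨hs.1, hs.2.le.trans htab.2⟩, hs₀⟩).not_gt hs.2

lemma exists_add_eq_mul_eq_one {c : ℝ} (hc : 2 ≤ c) :
    ∃ μ ν : ℝ, μ + ν = c ∧ μ * ν = 1 ∧ 0 < ν := by
  have hsq : √(c ^ 2 - 4) ^ 2 = c ^ 2 - 4 := sq_sqrt (by nlinarith)
  refine ⟨(c - √(c ^ 2 - 4)) / 2, (c + √(c ^ 2 - 4)) / 2, by ring, ?_, ?_⟩
  · linear_combination -hsq / 4
  · positivity

lemma hasDerivAt_exp_mul_mul {f f' : ℝ → ℝ} (hf : ∀ x, HasDerivAt f (f' x) x) (ν x : ℝ) :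
    HasDerivAt (fun t => exp (ν * t) * f t) (exp (ν * x) * (f' x + ν * f x)) x :=
  ((((hasDerivAt_id' x).const_mul ν).exp).mul (hf x)).congr_deriv (by ring)

noncomputable def glEnergy (B B' : ℝ → ℝ) (ξ : ℝ) : ℝ :=
  B' ξ ^ 2 / 2 + B ξ ^ 2 / 2 - B ξ ^ 4 / 4

lemma tendsto_glEnergy {B B' : ℝ → ℝ} {l : Filter ℝ} {L : ℝ} (hB : Tendsto B l (𝓝 L)) :
    Tendsto (glEnergy B B') (l ⊓ comap B' (𝓝 0)) (𝓝 (L ^ 2 / 2 - L ^ 4 / 4)) := by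
  have hB₀ : Tendsto B (l ⊓ comap B' (𝓝 0)) (𝓝 L) := hB.mono_left inf_le_left
  have hB' : Tendsto B' (l ⊓ comap B' (𝓝 0)) (𝓝 0) := tendsto_comap.mono_left inf_le_right
  unfold glEnergy
  simpa using (((hB'.pow 2).div_const 2).add ((hB₀.pow 2).div_const 2)).sub
    ((hB₀.pow 4).div_const 4)

def glField (c : ℝ) (p : ℝ × ℝ) : ℝ × ℝ := (p.2, -c * p.2 - p.1 + p.1 ^ 3)

def IsGLWave (c : ℝ) (B B' : ℝ → ℝ) : Prop :=
  ∀ ξ, HasDerivAt B (B' ξ) ξ ∧ HasDerivAt B' (-c * B' ξ - B ξ + B ξ ^ 3) ξ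

lemma isGLWave_one (c : ℝ) : IsGLWave c (fun _ => 1) (fun _ => 0) := fun ξ =>
  ⟨hasDerivAt_const ξ 1, by simpa using hasDerivAt_const ξ (0 : ℝ)⟩

namespace IsGLWave

variable {c : ℝ} {B B' : ℝ → ℝ}

lemma hasDerivAt (h : IsGLWave c B B') (ξ : ℝ) : HasDerivAt B (B' ξ) ξ := (h ξ).1

lemma continuous (h : IsGLWave c B B') : Continuous B :=
  continuous_iff_continuousAt.2 fun ξ => (h.hasDerivAt ξ).continuousAt

lemma hasDerivAt_prod (h : IsGLWave c B B') (ξ : ℝ) :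
    HasDerivAt (fun t => (B t, B' t)) (glField c (B ξ, B' ξ)) ξ :=
  (h ξ).1.prodMk (h ξ).2

lemma eqOn_Icc {D D' : ℝ → ℝ} (h : IsGLWave c B B') (hD : IsGLWave c D D') {a : ℝ}
    (ha : B a = D a) (ha' : B' a = D' a) (b : ℝ) : EqOn B D (Icc a b) := by
  have hγB : ContinuousOn (fun t => (B t, B' t)) (Icc a b) :=
    HasDerivAt.continuousOn fun t _ => h.hasDerivAt_prod t
  have hγD : ContinuousOn (fun t => (D t, D' t)) (Icc a b) :=
    HasDerivAt.continuousOn fun t _ => hD.hasDerivAt_prod t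
  set K := (fun t => (B t, B' t)) '' Icc a b ∪ (fun t => (D t, D' t)) '' Icc a b
  have hK : IsCompact K :=
    (isCompact_Icc.image_of_continuousOn hγB).union (isCompact_Icc.image_of_continuousOn hγD)
  have hsmooth : ContDiff ℝ 1 (glField c) := by unfold glField; fun_prop
  obtain ⟨L, hL⟩ :=
    hsmooth.locallyLipschitz.locallyLipschitzOn.exists_lipschitzOnWith_of_compact hK
  have hunique := ODE_solution_unique_of_mem_Icc_right (v := fun _ => glField c)
    (s := fun _ => K) (fun _ _ => hL)
    hγB (fun t _ => (h.hasDerivAt_prod t).hasDerivWithinAt)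
    (fun t ht => Or.inl ⟨t, Ico_subset_Icc_self ht, rfl⟩)
    hγD (fun t _ => (hD.hasDerivAt_prod t).hasDerivWithinAt)
    (fun t ht => Or.inr ⟨t, Ico_subset_Icc_self ht, rfl⟩) (Prod.ext ha ha')
  exact fun t ht => congrArg Prod.fst (hunique ht)

lemma hasDerivAt_glEnergy (h : IsGLWave c B B') (ξ : ℝ) :
    HasDerivAt (glEnergy B B') (-c * B' ξ ^ 2) ξ :=
  ((((h ξ).2.pow 2).div_const 2).add (((h ξ).1.pow 2).div_const 2)).sub
    (((h ξ).1.pow 4).div_const 4) |>.congr_deriv (by push_cast; ring)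

lemma antitone_glEnergy (h : IsGLWave c B B') (hc : 0 ≤ c) : Antitone (glEnergy B B') :=
  antitone_of_hasDerivAt_nonpos h.hasDerivAt_glEnergy fun _ =>
    mul_nonpos_of_nonpos_of_nonneg (neg_nonpos.2 hc) (sq_nonneg _)

lemma monotone_glEnergy (h : IsGLWave c B B') (hc : c ≤ 0) : Monotone (glEnergy B B') :=
  monotone_of_hasDerivAt_nonneg h.hasDerivAt_glEnergy fun _ =>
    mul_nonneg (neg_nonneg.2 hc) (sq_nonneg _)

lemma hasDerivAt_exp_mul_factor (h : IsGLWave c B B') {μ ν : ℝ} (hsum : μ + ν = c)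
    (hprod : μ * ν = 1) (x : ℝ) :
    HasDerivAt (fun s => exp (μ * s) * (B' s + ν * B s)) (exp (μ * x) * B x ^ 3) x :=
  (hasDerivAt_exp_mul_mul (f := fun s => B' s + ν * B s)
    (fun x => (h x).2.add ((h x).1.const_mul ν)) μ x).congr_deriv
    (by linear_combination exp (μ * x) * (B' x * hsum + B x * hprod))

lemma glEnergy_le (h : IsGLWave c B B') (hc : 0 ≤ c) (hminus : Tendsto B atBot (𝓝 1))
    (ξ : ℝ) : glEnergy B B' ξ ≤ 1 / 4 := by
  have := neBot_atBot_inf_comap_deriv h.hasDerivAt hminus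
  have hlim := tendsto_glEnergy (B' := B') hminus
  norm_num at hlim
  exact ge_of_tendsto hlim ((eventually_le_atBot ξ).filter_mono inf_le_left |>.mono
    fun x hx => h.antitone_glEnergy hc hx)

lemma lt_one (h : IsGLWave c B B') (hc : 0 ≤ c) (hminus : Tendsto B atBot (𝓝 1))
    (hplus : Tendsto B atTop (𝓝 0)) (ξ : ℝ) : B ξ < 1 := by
  by_contra! hξ
  obtain ⟨η, hη1, hηξ⟩ :=
    ((hplus.eventually (eventually_lt_nhds one_pos)).and (eventually_ge_atTop ξ)).exists
  obtain ⟨ζ, -, hBζ⟩ := intermediate_value_Icc' hηξ h.continuous.continuousOn ⟨hη1.le, hξ⟩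
  have hB'ζ : B' ζ = 0 := by
    have hE := h.glEnergy_le hc hminus ζ
    rw [glEnergy, hBζ] at hE
    exact pow_eq_zero_iff two_ne_zero |>.1 (by nlinarith [sq_nonneg (B' ζ)])
  have hone : ∀ t ≥ ζ, B t = 1 := fun t ht =>
    h.eqOn_Icc (isGLWave_one c) hBζ hB'ζ t ⟨ht, le_rfl⟩
  have hlim : Tendsto B atTop (𝓝 1) :=
    tendsto_const_nhds.congr' ((eventually_ge_atTop ζ).mono fun t ht => (hone t ht).symm)
  exact one_ne_zero (tendsto_nhds_unique hlim hplus)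

lemma pos (h : IsGLWave c B B') (hc : 2 ≤ c) (hminus : Tendsto B atBot (𝓝 1)) (ξ : ℝ) :
    0 < B ξ := by
  obtain ⟨μ, ν, hsum, hprod, hν⟩ := exists_add_eq_mul_eq_one hc
  by_contra! hξ
  have := neBot_atBot_inf_comap_deriv h.hasDerivAt hminus
  have hB := hminus.mono_left (inf_le_left (b := comap B' (𝓝 0)))
  have hw : Tendsto (fun t => B' t + ν * B t) (atBot ⊓ comap B' (𝓝 0)) (𝓝 ν) := by
    simpa using (tendsto_comap.mono_left inf_le_right).add (hB.const_mul ν)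
  obtain ⟨a, ⟨haξ, hBa⟩, hwa⟩ := (((eventually_le_atBot ξ).filter_mono inf_le_left).and
    (hB.eventually (eventually_gt_nhds one_pos))).and (hw.eventually (eventually_gt_nhds hν))
    |>.exists
  obtain ⟨t, ⟨hat, -⟩, hBt, hBpos⟩ := exists_first_nonpos h.continuous haξ hξ
  have hPmono := monotoneOn_Icc_of_hasDerivAt_nonneg (a := a) (b := t)
    (h.hasDerivAt_exp_mul_factor hsum hprod) fun x hx => by
      have := hBpos x ⟨hx.1.le, hx.2⟩
      positivity
  have hw_pos : ∀ s ∈ Icc a t, 0 < B' s + ν * B s := fun s hs =>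
    pos_of_mul_pos_right ((mul_pos (exp_pos _) hwa).trans_le (hPmono ⟨le_rfl, hat⟩ hs hs.1))
      (exp_pos _).le
  have hQ := monotoneOn_Icc_of_hasDerivAt_nonneg (hasDerivAt_exp_mul_mul h.hasDerivAt ν)
    (fun x hx => (mul_pos (exp_pos _) (hw_pos x (Ioo_subset_Icc_self hx))).le)
    ⟨le_rfl, hat⟩ ⟨hat, le_rfl⟩ hat
  nlinarith [mul_pos (exp_pos (ν * a)) hBa, exp_pos (ν * t)]

lemma false_of_nonpos (h : IsGLWave c B B') (hc : c ≤ 0) (hminus : Tendsto B atBot (𝓝 1))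
    (hplus : Tendsto B atTop (𝓝 0)) : False := by
  have := neBot_atBot_inf_comap_deriv h.hasDerivAt hminus
  have := neBot_atTop_inf_comap_deriv h.hasDerivAt hplus
  have hbot := tendsto_glEnergy (B' := B') hminus
  have htop := tendsto_glEnergy (B' := B') hplus
  have hge : ∀ ξ, 1 ^ 2 / 2 - 1 ^ 4 / 4 ≤ glEnergy B B' ξ := fun ξ =>
    le_of_tendsto hbot ((eventually_le_atBot ξ).filter_mono inf_le_left |>.mono
      fun x hx => h.monotone_glEnergy hc hx)
  have := ge_of_tendsto htop (Eventually.of_forall hge)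
  norm_num at this

end IsGLWave

/-- A real Ginzburg-Landau front: a solution of `B'' + cB' + B - B³ = 0` with
`B(-∞) = 1`, `B(+∞) = 0` satisfies, for `|c| ≥ 2`, `B(ξ) ∈ (0,1)` for all `ξ`. -/
theorem ginzburg_landau_front_in_strip
    (c : ℝ) (hc : |c| ≥ 2) (B B' : ℝ → ℝ)
    (hB : ∀ ξ, HasDerivAt B (B' ξ) ξ)
    (hB' : ∀ ξ, HasDerivAt B' (-c * B' ξ - B ξ + (B ξ) ^ 3) ξ)
    (hminus : Tendsto B atBot (nhds 1))
    (hplus : Tendsto B atTop (nhds 0)) :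
    ∀ ξ, B ξ ∈ Ioo (0 : ℝ) 1 := by
  have hwave : IsGLWave c B B' := fun ξ => ⟨hB ξ, hB' ξ⟩
  rcases le_abs.1 hc with hc | hc
  · exact fun ξ => ⟨hwave.pos hc hminus ξ, hwave.lt_one (by linarith) hminus hplus ξ⟩
  · exact (hwave.false_of_nonpos (by linarith) hminus hplus).elim
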